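/- arXiv:1006.3909 — 5 statements merged into one kernel-verified Lean document; each statement's English description precedes it below -/
import Mathlib

section
/- The 5-dimensional twisted cube TQ_5 contains two edge-disjoint Hamiltonian paths P and Q such that P starts at 00000 and ends at 11000, and Q starts at 00100 and ends at 01100. -/
/-- Parity function `P i b = b_i ⊕ b_{i-1} ⊕ ... ⊕ b_0`. -/
def parityFn {n : ℕ} (b : Fin n → Bool) (i : ℕ) : Bool :=
  decide ((((List.range (i+1)).filter fun j => if h : j < n then b ⟨j, h⟩ else false).length) % 2 = 1)

/-- The low-order `2k+1` bits of a binary string of length `2(k+1)+1`. -/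
def lowBits {k : ℕ} (b : Fin (2*(k+1)+1) → Bool) : Fin (2*k+1) → Bool :=
  fun i => b (Fin.castLE (by omega) i)

/-- The cross-edge relation in the twisted cube `TQ_{2(k+1)+1}`:
`b'` is a cross-edge neighbor of `b`. -/
def crossRel (k : ℕ) (b b' : Fin (2*(k+1)+1) → Bool) : Prop :=
  lowBits b' = lowBits b ∧
  ((b' ⟨2*k+2, by omega⟩ = !b ⟨2*k+2, by omega⟩ ∧ b' ⟨2*k+1, by omega⟩ = b ⟨2*k+1, by omega⟩) ∨
   (parityFn b (2*k) = false ∧ b' ⟨2*k+2, by omega⟩ = !b ⟨2*k+2, by omega⟩ ∧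
      b' ⟨2*k+1, by omega⟩ = !b ⟨2*k+1, by omega⟩) ∨
   (parityFn b (2*k) = true ∧ b' ⟨2*k+2, by omega⟩ = b ⟨2*k+2, by omega⟩ ∧
      b' ⟨2*k+1, by omega⟩ = !b ⟨2*k+1, by omega⟩))

/-- The twisted cube `TQ_n` for odd `n = 2k+1`, on vertex set the binary
strings of length `n` (bit `i` of `b` is `b i`). -/
def TwistedCube : (k : ℕ) → SimpleGraph (Fin (2*k+1) → Bool)
  | 0 => ⊤
  | (k+1) =>
    { Adj := fun b b' => b ≠ b' ∧
        ((b ⟨2*k+2, by omega⟩ = b' ⟨2*k+2, by omega⟩ ∧ b ⟨2*k+1, by omega⟩ = b' ⟨2*k+1, by omega⟩ ∧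
          (TwistedCube k).Adj (lowBits b) (lowBits b')) ∨
         crossRel k b b' ∨ crossRel k b' b)
      symm := ⟨by
        rintro b b' ⟨hne, h⟩
        refine ⟨hne.symm, ?_⟩
        rcases h with ⟨h1, h2, h3⟩ | h | h
        · exact Or.inl ⟨h1.symm, h2.symm, (TwistedCube k).adj_symm h3⟩
        · exact Or.inr (Or.inr h)
        · exact Or.inr (Or.inl h)⟩
      loopless := ⟨fun b h => h.1 rfl⟩ }

/-!
Both paths are exhibited explicitly as vertex sequences, a vertex `b` being written as the
number `∑ bᵢ 2^i` (so `11000` is `24`). Adjacency of consecutive vertices, distinctness of the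
32 vertices and disjointness of the two edge lists are then decided by evaluation.
-/

open SimpleGraph

instance crossRel.decidable (k : ℕ) : DecidableRel (crossRel k) :=
  fun _ _ => by unfold crossRel; infer_instance

instance TwistedCube.decidableAdj : (k : ℕ) → DecidableRel (TwistedCube k).Adj
  | 0 => fun b b' => inferInstanceAs (Decidable (b ≠ b'))
  | k + 1 => fun _ _ =>
    have := TwistedCube.decidableAdj k
    by unfold TwistedCube; infer_instance

namespace SimpleGraph.Walk

variable {V : Type*} {G : SimpleGraph V}

theorem exists_isHamiltonian_of_isChain [Fintype V] [DecidableEq V] {u v : V} {l : List V}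
    (hchain : l.IsChain G.Adj) (hnodup : l.Nodup) (hlength : l.length = Fintype.card V)
    (hu : l.head? = some u) (hv : l.getLast? = some v) :
    ∃ p : G.Walk u v, p.IsHamiltonian ∧ p.edges = l.zipWith (s(·, ·)) l.tail := by
  have hne : l ≠ [] := by rintro rfl; simp at hu
  obtain rfl : l.head hne = u := by simpa [List.head?_eq_some_head hne] using hu
  obtain rfl : l.getLast hne = v := by simpa [List.getLast?_eq_some_getLast hne] using hv
  refine ⟨ofSupport l hne hchain, ?_, by rw [edges_eq_zipWith_support, support_ofSupport]⟩
  rw [isHamiltonian_iff_isPath_and_length_eq, isPath_def, support_ofSupport, length_ofSupport]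
  exact ⟨hnodup, by omega⟩

end SimpleGraph.Walk

def bitString (m n : ℕ) : Fin m → Bool := fun i => n.testBit i

def tq5PathP : List (Fin 5 → Bool) :=
  [0, 4, 20, 28, 12, 10, 26, 18, 22, 16, 8, 14, 30, 6, 2, 3,
    1, 17, 21, 5, 29, 31, 27, 11, 19, 23, 7, 15, 13, 9, 25, 24].map (bitString 5)

def tq5PathQ : List (Fin 5 → Bool) :=
  [4, 5, 7, 6, 22, 14, 15, 11, 10, 2, 18, 20, 16, 0, 1, 9,
    8, 24, 28, 29, 25, 17, 19, 3, 27, 26, 30, 31, 23, 21, 13, 12].map (bitString 5)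

/-- `TQ_5` contains two edge-disjoint Hamiltonian paths `P` and `Q` such
that `P` starts at `00000` and ends at `11000`, and `Q` starts at `00100` and ends
at `01100`. -/
theorem tq5_two_edge_disjoint_hamiltonian_paths :
    ∃ (P : (TwistedCube 2).Walk (fun _ => false)
        (fun i => decide ((i : ℕ) = 4 ∨ (i : ℕ) = 3)))
      (Q : (TwistedCube 2).Walk (fun i => decide ((i : ℕ) = 2))
        (fun i => decide ((i : ℕ) = 3 ∨ (i : ℕ) = 2))),
      P.IsPath ∧ P.IsHamiltonian ∧ Q.IsPath ∧ Q.IsHamiltonian ∧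
      ∀ e, e ∈ P.edges → e ∉ Q.edges := by
  obtain ⟨P, hP, hPedges⟩ := Walk.exists_isHamiltonian_of_isChain (G := TwistedCube 2)
    (u := fun _ => false) (v := fun i => decide ((i : ℕ) = 4 ∨ (i : ℕ) = 3))
    (l := tq5PathP) (by decide) (by decide) (by simp [tq5PathP]) (by decide) (by decide)
  obtain ⟨Q, hQ, hQedges⟩ := Walk.exists_isHamiltonian_of_isChain (G := TwistedCube 2)
    (u := fun i => decide ((i : ℕ) = 2)) (v := fun i => decide ((i : ℕ) = 3 ∨ (i : ℕ) = 2))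
    (l := tq5PathQ) (by decide) (by decide) (by simp [tq5PathQ]) (by decide) (by decide)
  refine ⟨P, Q, hP.isPath, hP, hQ.isPath, hQ, ?_⟩
  rw [hPedges, hQedges]
  decide +kernel
end

section
/- For every odd integer n ≥ 5, the twisted cube TQ_n contains two edge-disjoint Hamiltonian paths P and Q with start(P) = 00(0)^{n-5}000, end(P) = 11(0)^{n-5}000, start(Q) = 00(0)^{n-5}100, and end(Q) = 01(0)^{n-5}100. -/
lemma parityFn_succ {n i : ℕ} (b : Fin n → Bool) (h : i + 1 < n) :
    parityFn b (i+1) = (parityFn b i ^^ b ⟨i+1, h⟩) := by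
  unfold parityFn
  rw [List.range_succ (n := i+1), List.filter_append, List.length_append,
    List.filter_singleton, dif_pos h]
  generalize (List.filter _ (List.range (i+1))).length = m
  cases b ⟨i+1, h⟩ <;> rcases Nat.mod_two_eq_zero_or_one m with hm | hm <;> simp [hm, Nat.add_mod]

lemma SimpleGraph.Walk.disjoint_edges_of_zip_support {V : Type*} {G : SimpleGraph V}
    {u v u' v' : V} {p : G.Walk u v} {q : G.Walk u' v'}
    (h : ∀ a ∈ p.support.zip p.support.tail, ∀ b ∈ q.support.zip q.support.tail,
      b ≠ a ∧ b ≠ a.swap) :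
    p.edges.Disjoint q.edges := by
  simp only [SimpleGraph.Walk.edges_eq_zipWith_support, ← List.map_uncurry_zip_eq_zipWith]
  intro e he he'
  obtain ⟨a, ha, rfl⟩ := List.mem_map.mp he
  obtain ⟨b, hb, hab⟩ := List.mem_map.mp he'
  have := h a ha b hb
  exact (Sym2.mk_eq_mk_iff.mp hab).elim this.1 this.2

open SimpleGraph

namespace TwistedCube

instance decidableCrossRel (k : ℕ) : DecidableRel (crossRel k) :=
  fun _ _ => inferInstanceAs (Decidable (_ ∧ _))

instance decidableAdj_s4 : (k : ℕ) → DecidableRel (TwistedCube k).Adj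
  | 0 => fun a b => decidable_of_iff (a ≠ b) Iff.rfl
  | k + 1 => fun _ _ =>
    haveI := decidableAdj_s4 k
    inferInstanceAs (Decidable (_ ∧ _))

variable {k : ℕ}

/-- The subcube `TQ^{ij}` of `TQ_{2k+3}`, for `q = (i, j)`. -/
def copy (k : ℕ) (q : Bool × Bool) : TwistedCube k →g TwistedCube (k+1) where
  toFun b m := if h : (m : ℕ) < 2*k+1 then b ⟨m, h⟩ else if (m : ℕ) = 2*k+1 then q.2 else q.1
  map_rel' {a b} h := by
    refine ⟨fun he => h.ne ?_, Or.inl ⟨by simp, by simp, ?_⟩⟩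
    · funext m
      simpa [m.isLt] using congrFun he (Fin.castLE (by omega) m)
    · convert h <;> funext m <;> simp [lowBits, m.isLt]

@[simp] lemma lowBits_copy (q : Bool × Bool) (b : Fin (2*k+1) → Bool) :
    lowBits (copy k q b) = b := by
  funext m
  exact dif_pos m.isLt

@[simp] lemma copy_apply_top (q : Bool × Bool) (b : Fin (2*k+1) → Bool) :
    copy k q b ⟨2*k+2, by omega⟩ = q.1 := by
  simp [copy]

@[simp] lemma copy_apply_next (q : Bool × Bool) (b : Fin (2*k+1) → Bool) :
    copy k q b ⟨2*k+1, by omega⟩ = q.2 := by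
  simp [copy]

lemma copy_eq_copy_iff {q q' : Bool × Bool} {a b : Fin (2*k+1) → Bool} :
    copy k q a = copy k q' b ↔ q = q' ∧ a = b := by
  refine ⟨fun h => ⟨Prod.ext ?_ ?_, ?_⟩, fun ⟨hq, hab⟩ => hq ▸ hab ▸ rfl⟩
  · simpa using congrFun h ⟨2*k+2, by omega⟩
  · simpa using congrFun h ⟨2*k+1, by omega⟩
  · simpa using congrArg lowBits h

lemma copy_highBits_lowBits (v : Fin (2*(k+1)+1) → Bool) :
    copy k (v ⟨2*k+2, by omega⟩, v ⟨2*k+1, by omega⟩) (lowBits v) = v := by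
  funext m
  simp only [copy, RelHom.coeFn_mk, lowBits]
  split_ifs with h₁ h₂
  · rfl
  · exact congrArg v (Fin.ext h₂.symm)
  · exact congrArg v (Fin.ext (by simp only; omega))

lemma parityFn_copy (q : Bool × Bool) (b : Fin (2*k+1) → Bool) :
    parityFn (copy k q b) (2*k) = parityFn b (2*k) := by
  unfold parityFn
  refine congrArg (fun l => decide (List.length l % 2 = 1)) (List.filter_congr fun j hj => ?_)
  have hj : j < 2*k+1 := List.mem_range.mp hj
  simp [copy, hj, show j < 2*(k+1)+1 by omega, show j ≤ 2*k by omega]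

lemma parityFn_copy_top (q : Bool × Bool) (b : Fin (2*k+1) → Bool) :
    parityFn (copy k q b) (2*(k+1)) = (parityFn b (2*k) ^^ q.2 ^^ q.1) := by
  change parityFn _ (2*k+1+1) = _
  rw [parityFn_succ _ (by omega), parityFn_succ _ (by omega), parityFn_copy]
  simp [copy]

lemma adj_copy_not_fst (i j : Bool) (b : Fin (2*k+1) → Bool) :
    (TwistedCube (k+1)).Adj (copy k (i, j) b) (copy k (!i, j) b) :=
  ⟨by simp [copy_eq_copy_iff], Or.inr (Or.inl ⟨by simp, Or.inl ⟨by simp, by simp⟩⟩)⟩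

lemma adj_copy_not_not {b : Fin (2*k+1) → Bool} (hb : parityFn b (2*k) = false) (i j : Bool) :
    (TwistedCube (k+1)).Adj (copy k (i, j) b) (copy k (!i, !j) b) :=
  ⟨by simp [copy_eq_copy_iff],
    Or.inr (Or.inl ⟨by simp, Or.inr (Or.inl ⟨by rw [parityFn_copy, hb], by simp, by simp⟩)⟩)⟩

lemma adj_copy_not_snd {b : Fin (2*k+1) → Bool} (hb : parityFn b (2*k) = true) (i j : Bool) :
    (TwistedCube (k+1)).Adj (copy k (i, j) b) (copy k (i, !j) b) :=
  ⟨by simp [copy_eq_copy_iff],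
    Or.inr (Or.inl ⟨by simp, Or.inr (Or.inr ⟨by rw [parityFn_copy, hb], by simp, by simp⟩)⟩)⟩

lemma count_map_copy (l : List (Fin (2*k+1) → Bool)) (q q' : Bool × Bool)
    (a : Fin (2*k+1) → Bool) :
    (l.map (copy k q)).count (copy k q' a) = if q = q' then l.count a else 0 := by
  split_ifs with hq
  · subst hq
    exact List.count_map_of_injective _ _ (fun _ _ h => (copy_eq_copy_iff.mp h).2) _
  · refine List.count_eq_zero_of_not_mem fun ha => ?_
    obtain ⟨b, -, hb⟩ := List.mem_map.mp ha
    exact hq (copy_eq_copy_iff.mp hb).1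

@[simp] lemma map_lowBits_map_copy (q : Bool × Bool) (e : Sym2 (Fin (2*k+1) → Bool)) :
    (e.map (copy k q)).map lowBits = e := by
  simp [Sym2.map_map]

section

variable {x y : Fin (2*k+1) → Bool}

def snake (p : (TwistedCube k).Walk x y) (q₁ q₂ q₃ q₄ : Bool × Bool)
    (h₁ : (TwistedCube (k+1)).Adj (copy k q₁ y) (copy k q₂ y))
    (h₂ : (TwistedCube (k+1)).Adj (copy k q₂ x) (copy k q₃ x))
    (h₃ : (TwistedCube (k+1)).Adj (copy k q₃ y) (copy k q₄ y)) :
    (TwistedCube (k+1)).Walk (copy k q₁ x) (copy k q₄ x) :=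
  (p.map (copy k q₁)).append <| .cons h₁ <| (p.reverse.map (copy k q₂)).append <| .cons h₂ <|
    (p.map (copy k q₃)).append <| .cons h₃ <| p.reverse.map (copy k q₄)

variable {p : (TwistedCube k).Walk x y} {q₁ q₂ q₃ q₄ : Bool × Bool}
  {h₁ : (TwistedCube (k+1)).Adj (copy k q₁ y) (copy k q₂ y)}
  {h₂ : (TwistedCube (k+1)).Adj (copy k q₂ x) (copy k q₃ x)}
  {h₃ : (TwistedCube (k+1)).Adj (copy k q₃ y) (copy k q₄ y)}

lemma support_snake : (snake p q₁ q₂ q₃ q₄ h₁ h₂ h₃).support =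
    p.support.map (copy k q₁) ++ p.support.reverse.map (copy k q₂) ++
      p.support.map (copy k q₃) ++ p.support.reverse.map (copy k q₄) := by
  rw [snake]
  simp [Walk.support_append]

lemma isHamiltonian_snake (hp : p.IsHamiltonian) (hq : ∀ q, [q₁, q₂, q₃, q₄].count q = 1) :
    (snake p q₁ q₂ q₃ q₄ h₁ h₂ h₃).IsHamiltonian := by
  intro v
  rw [support_snake, ← copy_highBits_lowBits v]
  have hcount := hq (v ⟨2*k+2, by omega⟩, v ⟨2*k+1, by omega⟩)
  simp [count_map_copy, List.count_reverse, hp _, List.count_cons] at hcount ⊢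
  omega

lemma map_lowBits_mem_edges_of_mem_edges_snake {e : Sym2 (Fin (2*(k+1)+1) → Bool)}
    (he : e ∈ (snake p q₁ q₂ q₃ q₄ h₁ h₂ h₃).edges) :
    e.map lowBits ∈ p.edges ∨ e.map lowBits = s(x, x) ∨ e.map lowBits = s(y, y) := by
  rw [snake] at he
  simp only [Walk.edges_append, Walk.edges_map, Walk.edges_cons, Walk.edges_reverse,
    List.map_reverse, List.mem_append, List.mem_map, List.mem_cons, List.mem_reverse] at he
  rcases he with ⟨a, ha, rfl⟩ | rfl | ⟨a, ha, rfl⟩ | rfl | ⟨a, ha, rfl⟩ | rfl | ⟨a, ha, rfl⟩ <;>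
    simp [*]

lemma disjoint_edges_snake {x' y' : Fin (2*k+1) → Bool} {p' : (TwistedCube k).Walk x' y'}
    {r₁ r₂ r₃ r₄ : Bool × Bool}
    {g₁ : (TwistedCube (k+1)).Adj (copy k r₁ y') (copy k r₂ y')}
    {g₂ : (TwistedCube (k+1)).Adj (copy k r₂ x') (copy k r₃ x')}
    {g₃ : (TwistedCube (k+1)).Adj (copy k r₃ y') (copy k r₄ y')}
    (hpp' : p.edges.Disjoint p'.edges) (hxx' : x ≠ x') (hxy' : x ≠ y') (hyx' : y ≠ x')
    (hyy' : y ≠ y') :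
    (snake p q₁ q₂ q₃ q₄ h₁ h₂ h₃).edges.Disjoint (snake p' r₁ r₂ r₃ r₄ g₁ g₂ g₃).edges := by
  intro e he he'
  have not_isDiag {a b} {r : (TwistedCube k).Walk a b} (h : e.map lowBits ∈ r.edges) :
      ¬ (e.map lowBits).IsDiag :=
    not_isDiag_of_mem_edgeSet _ (r.edges_subset_edgeSet h)
  rcases map_lowBits_mem_edges_of_mem_edges_snake he with h | h | h <;>
    rcases map_lowBits_mem_edges_of_mem_edges_snake he' with h' | h' | h'
  · exact hpp' h h'
  all_goals first
    | exact not_isDiag h (h' ▸ Sym2.mk_isDiag_iff.mpr rfl)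
    | exact not_isDiag h' (h ▸ Sym2.mk_isDiag_iff.mpr rfl)
    | simp_all

end

def startP (k : ℕ) : Fin (2*k+1) → Bool := fun _ => false
def endP (k : ℕ) : Fin (2*k+1) → Bool := fun i => decide ((i : ℕ) = 2*k ∨ (i : ℕ) = 2*k-1)
def startQ (k : ℕ) : Fin (2*k+1) → Bool := fun i => decide ((i : ℕ) = 2)
def endQ (k : ℕ) : Fin (2*k+1) → Bool := fun i => decide ((i : ℕ) = 2*k-1 ∨ (i : ℕ) = 2)

lemma copy_startP : copy k (false, false) (startP k) = startP (k+1) := by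
  funext m
  simp only [copy, RelHom.coeFn_mk, startP]
  split_ifs <;> rfl

lemma copy_startP_eq_endP : copy k (true, true) (startP k) = endP (k+1) := by
  funext m
  have := m.isLt
  simp only [copy, RelHom.coeFn_mk, startP, endP]
  split_ifs <;> simp <;> omega

lemma copy_startQ (hk : 1 ≤ k) : copy k (false, false) (startQ k) = startQ (k+1) := by
  funext m
  have := m.isLt
  simp only [copy, RelHom.coeFn_mk, startQ]
  split_ifs <;> simp <;> omega

lemma copy_startQ_eq_endQ (hk : 1 ≤ k) : copy k (false, true) (startQ k) = endQ (k+1) := by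
  funext m
  have := m.isLt
  simp only [copy, RelHom.coeFn_mk, startQ, endQ]
  split_ifs <;> simp <;> omega

lemma parityFn_startP : parityFn (startP k) (2*k) = false := by
  simp [parityFn, startP]

lemma parityFn_startQ (hk : 1 ≤ k) : parityFn (startQ k) (2*k) = true := by
  induction k, hk using Nat.le_induction with
  | base => decide
  | succ k hk ih => rw [← copy_startQ hk, parityFn_copy_top, ih]; rfl

lemma parityFn_endQ (hk : 2 ≤ k) : parityFn (endQ k) (2*k) = false := by
  obtain ⟨k, rfl⟩ : ∃ m, k = m + 1 := ⟨k - 1, by omega⟩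
  rw [← copy_startQ_eq_endQ (by omega), parityFn_copy_top, parityFn_startQ (by omega)]
  rfl

def HasHamiltonianPathPair (k : ℕ) : Prop :=
  ∃ (P : (TwistedCube k).Walk (startP k) (endP k)) (Q : (TwistedCube k).Walk (startQ k) (endQ k)),
    P.IsHamiltonian ∧ Q.IsHamiltonian ∧ P.edges.Disjoint Q.edges

lemma HasHamiltonianPathPair.succ (hk : 2 ≤ k) (h : HasHamiltonianPathPair k) :
    HasHamiltonianPathPair (k+1) := by
  obtain ⟨P, Q, hP, hQ, hPQ⟩ := h
  rw [HasHamiltonianPathPair, ← copy_startP, ← copy_startP_eq_endP, ← copy_startQ (by omega),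
    ← copy_startQ_eq_endQ (by omega)]
  refine ⟨snake P (false, false) (true, false) (false, true) (true, true)
      (adj_copy_not_fst _ _ _) (adj_copy_not_not parityFn_startP _ _) (adj_copy_not_fst _ _ _),
    snake Q (false, false) (true, true) (true, false) (false, true)
      (adj_copy_not_not (parityFn_endQ hk) _ _) (adj_copy_not_snd (parityFn_startQ (by omega)) _ _)
      (adj_copy_not_not (parityFn_endQ hk) _ _),
    isHamiltonian_snake hP (by decide), isHamiltonian_snake hQ (by decide),
    disjoint_edges_snake hPQ ?_ ?_ ?_ ?_⟩
  -- the endpoints at level `k` are told apart by bit 2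
  all_goals
    intro h
    have := congrFun h ⟨2, by omega⟩
    simp [startP, endP, startQ, endQ] at this <;> omega

def ofBinary (m : ℕ) : Fin (2*2+1) → Bool := fun i => m.testBit i

lemma hasHamiltonianPathPair_two : HasHamiltonianPathPair 2 := by
  let L := [0, 6, 7, 15, 11, 10, 12, 8, 14, 22, 16, 17, 19, 23, 21, 5, 4, 2, 3, 1, 9, 13, 29, 28,
    20, 18, 26, 30, 31, 27, 25, 24].map ofBinary
  let M := [4, 20, 21, 17, 25, 9, 8, 16, 0, 1, 5, 29, 31, 23, 7, 3, 19, 11, 27, 26, 28, 24, 30, 6,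
    22, 18, 2, 10, 14, 15, 13, 12].map ofBinary
  have hL : L.IsChain (TwistedCube 2).Adj := by decide
  have hM : M.IsChain (TwistedCube 2).Adj := by decide
  refine ⟨(Walk.ofSupport L (by simp [L]) hL).copy (by decide) (by decide),
    (Walk.ofSupport M (by simp [M]) hM).copy (by decide) (by decide), ?_, ?_, ?_⟩
  · simp only [Walk.IsHamiltonian, Walk.support_copy,
      Walk.support_ofSupport]
    decide
  · simp only [Walk.IsHamiltonian, Walk.support_copy,
      Walk.support_ofSupport]
    decide
  · refine Walk.disjoint_edges_of_zip_support ?_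
    simp only [Walk.support_copy, Walk.support_ofSupport]
    decide +kernel

end TwistedCube

/-- For every odd `n = 2k+1 ≥ 5`, `TQ_n` contains two edge-disjoint
Hamiltonian paths `P` from `00(0)^{n-5}000` to `11(0)^{n-5}000` and `Q` from
`00(0)^{n-5}100` to `01(0)^{n-5}100`. -/
theorem twistedCube_two_edge_disjoint_hamiltonian_paths (k : ℕ) (hk : 2 ≤ k) :
    ∃ (P : (TwistedCube k).Walk (fun _ => false)
        (fun i => decide ((i : ℕ) = 2*k ∨ (i : ℕ) = 2*k-1)))
      (Q : (TwistedCube k).Walk (fun i => decide ((i : ℕ) = 2))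
        (fun i => decide ((i : ℕ) = 2*k-1 ∨ (i : ℕ) = 2))),
      P.IsPath ∧ P.IsHamiltonian ∧ Q.IsPath ∧ Q.IsHamiltonian ∧
      ∀ e, e ∈ P.edges → e ∉ Q.edges := by
  obtain ⟨P, Q, hP, hQ, hPQ⟩ : TwistedCube.HasHamiltonianPathPair k :=
    Nat.le_induction TwistedCube.hasHamiltonianPathPair_two (fun k hk h => h.succ hk) k hk
  exact ⟨P, Q, hP.isPath, hP, hQ.isPath, hQ, hPQ⟩
end

section
/- For every odd integer n ≥ 3, the twisted cube TQ_n contains two vertex-disjoint cycles, each on exactly 2^(n-1) vertices, whose vertex sets partition V(TQ_n). -/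
namespace SimpleGraph.Walk

variable {V W : Type*} {G : SimpleGraph V} {H : SimpleGraph W}

lemma IsPath.append_cons {u v w x : V} {p : G.Walk u v} {q : G.Walk w x} (hp : p.IsPath)
    (hq : q.IsPath) (h : G.Adj v w) (hpq : p.support.Disjoint q.support) :
    (p.append (cons h q)).IsPath := by
  rw [isPath_def, support_append, support_cons, List.tail_cons]
  exact List.nodup_append'.2 ⟨hp.support_nodup, hq.support_nodup, hpq⟩

lemma IsPath.cons_isCycle_of_one_lt_length {u v : V} {p : G.Walk u v} (hp : p.IsPath)
    (h : G.Adj v u) (hl : 1 < p.length) : (cons h p).IsCycle :=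
  (cons_isCycle_iff p h).2
    ⟨hp, fun he => hl.ne' (hp.length_eq_one_of_mem_edges (Sym2.eq_swap ▸ he))⟩

def ladder (f g : G →g H) {u s : V} (q : G.Walk u s) (h : H.Adj (f s) (g s)) :
    H.Walk (f u) (g u) :=
  (q.map f).append (cons h (q.map g).reverse)

section ladder

variable {f g : G →g H} {u s : V} {q : G.Walk u s} {h : H.Adj (f s) (g s)}

lemma support_ladder : (ladder f g q h).support = q.support.map f ++ (q.support.map g).reverse := by
  rw [ladder, support_append, support_cons, List.tail_cons, support_reverse, support_map,
    support_map]

lemma length_ladder : (ladder f g q h).length = 2 * q.length + 1 := by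
  rw [ladder, length_append, length_cons, length_reverse, length_map, length_map]
  ring

lemma mem_support_ladder_iff {w : W} :
    w ∈ (ladder f g q h).support ↔ ∃ a ∈ q.support, f a = w ∨ g a = w := by
  simp only [support_ladder, List.mem_append, List.mem_reverse, List.mem_map]
  grind

lemma IsPath.ladder (hq : q.IsPath) (hf : Function.Injective f) (hg : Function.Injective g)
    (hfg : ∀ a b, f a ≠ g b) : (ladder f g q h).IsPath :=
  IsPath.append_cons (hq.map hf) (hq.map hg).reverse h <| by
    simp only [support_reverse, support_map, List.disjoint_reverse_right]
    simp only [List.disjoint_left, List.mem_map]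
    rintro _ ⟨a, -, rfl⟩ ⟨b, -, hb⟩
    exact hfg a b hb.symm

end ladder

end SimpleGraph.Walk

open SimpleGraph Walk

namespace TwistedCube

def extend (k : ℕ) (x y : Bool) (v : Fin (2*k+1) → Bool) : Fin (2*(k+1)+1) → Bool :=
  fun i => if h : (i : ℕ) < 2*k+1 then v ⟨i, h⟩ else if (i : ℕ) = 2*k+1 then y else x

variable {k : ℕ}

@[simp]
lemma lowBits_extend (x y : Bool) (v : Fin (2*k+1) → Bool) : lowBits (extend k x y v) = v := by
  funext i
  simp [lowBits, extend, i.2]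

@[simp]
lemma extend_apply_top (x y : Bool) (v : Fin (2*k+1) → Bool) :
    extend k x y v ⟨2*k+2, by omega⟩ = x := by
  simp [extend]

@[simp]
lemma extend_apply_sec (x y : Bool) (v : Fin (2*k+1) → Bool) :
    extend k x y v ⟨2*k+1, by omega⟩ = y := by
  simp [extend]

lemma extend_eq_extend_iff {x y x' y' : Bool} {v v' : Fin (2*k+1) → Bool} :
    extend k x y v = extend k x' y' v' ↔ x = x' ∧ y = y' ∧ v = v' := by
  refine ⟨fun h => ⟨?_, ?_, ?_⟩, by rintro ⟨rfl, rfl, rfl⟩; rfl⟩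
  · simpa using congrFun h ⟨2*k+2, by omega⟩
  · simpa using congrFun h ⟨2*k+1, by omega⟩
  · simpa using congrArg lowBits h

lemma extend_lowBits (w : Fin (2*(k+1)+1) → Bool) :
    extend k (w ⟨2*k+2, by omega⟩) (w ⟨2*k+1, by omega⟩) (lowBits w) = w := by
  funext i
  simp only [extend, lowBits]
  split_ifs with h₁ h₂ <;> congr 1 <;> ext <;> simp <;> omega

lemma parityFn_extend_allTrue (x y : Bool) :
    parityFn (extend k x y fun _ => true) (2*k) = true := by
  have hfilter : (List.range (2*k+1)).filter
      (fun j => if h : j < 2*(k+1)+1 then extend k x y (fun _ => true) ⟨j, h⟩ else false)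
      = List.range (2*k+1) :=
    List.filter_eq_self.2 fun j hj => by
      have := List.mem_range.1 hj
      simp [extend, this, show j < 2*(k+1)+1 by omega]
  rw [parityFn, hfilter, List.length_range, decide_eq_true_iff]
  omega

lemma adj_extend_of_adj (x y : Bool) {v w : Fin (2*k+1) → Bool} (h : (TwistedCube k).Adj v w) :
    (TwistedCube (k+1)).Adj (extend k x y v) (extend k x y w) :=
  ⟨fun he => h.ne (extend_eq_extend_iff.1 he).2.2, Or.inl (by simpa using h)⟩

lemma adj_extend_not_top (x y : Bool) (v : Fin (2*k+1) → Bool) :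
    (TwistedCube (k+1)).Adj (extend k x y v) (extend k (!x) y v) :=
  ⟨fun he => by simp [extend_eq_extend_iff] at he, Or.inr (Or.inl (by simp [crossRel]))⟩

lemma adj_extend_not_sec_allTrue (x y : Bool) :
    (TwistedCube (k+1)).Adj (extend k x y fun _ => true) (extend k x (!y) fun _ => true) :=
  ⟨fun he => by simp [extend_eq_extend_iff] at he,
    Or.inr (Or.inl (by simp [crossRel, parityFn_extend_allTrue]))⟩

def extendHom (k : ℕ) (x y : Bool) : TwistedCube k →g TwistedCube (k+1) :=
  ⟨extend k x y, adj_extend_of_adj x y⟩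

@[simp]
lemma coe_extendHom (x y : Bool) : ⇑(extendHom k x y) = extend k x y := rfl

section ladder

variable {x y : Bool} {u s : Fin (2*k+1) → Bool} {q : (TwistedCube k).Walk u s}
  {h : (TwistedCube (k+1)).Adj (extendHom k x y s) (extendHom k (!x) y s)}

lemma isPath_ladder_extendHom (hq : q.IsPath) :
    (ladder (extendHom k x y) (extendHom k (!x) y) q h).IsPath :=
  hq.ladder (fun _ _ he => (extend_eq_extend_iff.1 he).2.2)
    (fun _ _ he => (extend_eq_extend_iff.1 he).2.2)
    (fun _ _ he => by simp [extend_eq_extend_iff] at he)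

lemma mem_support_ladder_extendHom_iff (hq : ∀ a, a ∈ q.support) (w : Fin (2*(k+1)+1) → Bool) :
    w ∈ (ladder (extendHom k x y) (extendHom k (!x) y) q h).support ↔
      w ⟨2*k+1, by omega⟩ = y := by
  rw [mem_support_ladder_iff]
  constructor
  · rintro ⟨a, -, rfl | rfl⟩ <;> simp
  · intro hy
    refine ⟨lowBits w, hq _, ?_⟩
    rw [← extend_lowBits w, hy]
    cases w ⟨2*k+2, by omega⟩ <;> cases x <;> simp

end ladder

lemma exists_isHamiltonian_walk_from_allTrue (k : ℕ) :
    ∃ s, ∃ q : (TwistedCube k).Walk (fun _ => true) s, q.IsHamiltonian := by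
  induction k with
  | zero =>
    have hadj : (TwistedCube 0).Adj (fun _ => true) (fun _ => false) :=
      fun h => by simpa using congrFun h 0
    refine ⟨_, hadj.toWalk, (IsPath.of_adj hadj).isHamiltonian_of_mem fun w => ?_⟩
    have hw : w = fun _ => w 0 := funext fun i => congrArg w (Fin.ext (by omega))
    rw [hw]
    cases w 0 <;> simp
  | succ k ih =>
    obtain ⟨s, q, hq⟩ := ih
    let L₁ := ladder (extendHom k true true) (extendHom k (!true) true) q
      (adj_extend_not_top true true s)
    let L₂ := ladder (extendHom k false false) (extendHom k (!false) false) q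
      (adj_extend_not_top false false s)
    have hmem₁ := mem_support_ladder_extendHom_iff (h := adj_extend_not_top true true s)
      hq.mem_support
    have hmem₂ := mem_support_ladder_extendHom_iff (h := adj_extend_not_top false false s)
      hq.mem_support
    have hmid : (TwistedCube (k+1)).Adj (extendHom k (!true) true fun _ => true)
        (extendHom k false false fun _ => true) :=
      adj_extend_not_sec_allTrue false true
    have hP : (L₁.append (cons hmid L₂)).IsPath :=
      (isPath_ladder_extendHom hq.isPath).append_cons (isPath_ladder_extendHom hq.isPath) hmid
        (List.disjoint_left.2 fun w h₁ h₂ => by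
          simpa [(hmem₁ w).1 h₁] using (hmem₂ w).1 h₂)
    have hstart : extend k true true (fun _ => true) = fun _ => true := by
      funext i
      simp only [extend]
      split_ifs <;> rfl
    rw [← hstart]
    refine ⟨_, _, hP.isHamiltonian_of_mem fun w => ?_⟩
    rw [support_append, support_cons, List.tail_cons, List.mem_append, hmem₁, hmem₂]
    cases w ⟨2*k+1, by omega⟩ <;> simp

lemma exists_isCycle_forall_mem_support_iff (k : ℕ) (y : Bool) :
    ∃ (c : Fin (2*(k+1)+1) → Bool) (C : (TwistedCube (k+1)).Walk c c),
      C.IsCycle ∧ C.support.tail.length = 2^(2*(k+1)) ∧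
      ∀ w, w ∈ C.support ↔ w ⟨2*k+1, by omega⟩ = y := by
  obtain ⟨s, q, hq⟩ := exists_isHamiltonian_walk_from_allTrue k
  let L := ladder (extendHom k false y) (extendHom k (!false) y) q (adj_extend_not_top false y s)
  have hclose : (TwistedCube (k+1)).Adj (extendHom k (!false) y fun _ => true)
      (extendHom k false y fun _ => true) :=
    (adj_extend_not_top false y fun _ => true).symm
  have hlen : q.length + 1 = 2^(2*k+1) := by
    simp [hq.length_eq, Nat.sub_add_cancel Nat.one_le_two_pow]
  have hL : L.length = 2 * q.length + 1 := length_ladder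
  have hq₁ : 1 ≤ q.length := by
    have := Nat.one_lt_two_pow (n := 2*k+1) (by omega)
    omega
  refine ⟨_, cons hclose L, (isPath_ladder_extendHom hq.isPath).cons_isCycle_of_one_lt_length
    hclose (by rw [hL]; omega), ?_, fun w => ?_⟩
  · rw [support_cons, List.tail_cons, length_support, hL, show 2*(k+1) = 2*k+1+1 by ring, pow_succ,
      ← hlen]
    ring
  · rw [support_cons, List.mem_cons,
      (mem_support_ladder_extendHom_iff hq.mem_support w : w ∈ L.support ↔ _), or_iff_right_of_imp]
    rintro rfl
    simp

end TwistedCube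

/-- For every odd `n = 2k+1 ≥ 3`, `TQ_n` contains two vertex-disjoint
cycles, each on exactly `2^(n-1)` vertices, whose vertex sets partition `V(TQ_n)`. -/
theorem twistedCube_two_equal_node_disjoint_cycles (k : ℕ) (hk : 1 ≤ k) :
    ∃ (a b : Fin (2*k+1) → Bool) (C₁ : (TwistedCube k).Walk a a)
      (C₂ : (TwistedCube k).Walk b b),
      C₁.IsCycle ∧ C₂.IsCycle ∧
      C₁.support.tail.length = 2^(2*k) ∧ C₂.support.tail.length = 2^(2*k) ∧
      (∀ v, v ∈ C₁.support → v ∉ C₂.support) ∧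
      (∀ v : Fin (2*k+1) → Bool, v ∈ C₁.support ∨ v ∈ C₂.support) := by
  obtain ⟨j, rfl⟩ : ∃ j, k = j + 1 := ⟨k - 1, by omega⟩
  obtain ⟨a, C₁, hC₁, hlen₁, hmem₁⟩ := TwistedCube.exists_isCycle_forall_mem_support_iff j false
  obtain ⟨b, C₂, hC₂, hlen₂, hmem₂⟩ := TwistedCube.exists_isCycle_forall_mem_support_iff j true
  refine ⟨a, b, C₁, C₂, hC₁, hC₂, hlen₁, hlen₂, fun v h₁ h₂ => ?_, fun v => ?_⟩
  · exact Bool.false_ne_true (((hmem₁ v).1 h₁).symm.trans ((hmem₂ v).1 h₂))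
  · rw [hmem₁, hmem₂]
    cases v ⟨2*j+1, by omega⟩ <;> simp
end

section
/- For any odd n ≥ 5, if each of the four subcubes TQ_{n-2}^{ij} of TQ_n contains two edge-disjoint Hamiltonian paths P^{ij} from ij00(0)^{n-7}000 to ij11(0)^{n-7}000 and Q^{ij} from ij00(0)^{n-7}100 to ij01(0)^{n-7}100, then the concatenations P = P^{00} ⇒ reverse(P^{10}) ⇒ P^{01} ⇒ reverse(P^{11}) and Q = Q^{00} ⇒ reverse(Q^{10}) ⇒ Q^{11} ⇒ reverse(Q^{01}) are two edge-disjoint Hamiltonian paths of TQ_n. -/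
/-- Start of the Hamiltonian path `P^{ij}` in the subcube with leading bits `ij`:
the string `ij00(0)^{n-7}000` (all low bits zero), with `n = 2(m+1)+1`. -/
def startP (m : ℕ) (i j : Bool) : Fin (2*(m+1)+1) → Bool :=
  fun idx => if (idx : ℕ) = 2*m+2 then i else if (idx : ℕ) = 2*m+1 then j else false

/-- End of `P^{ij}`: the string `ij11(0)^{n-7}000`. -/
def endP (m : ℕ) (i j : Bool) : Fin (2*(m+1)+1) → Bool :=
  fun idx => if (idx : ℕ) = 2*m+2 then i else if (idx : ℕ) = 2*m+1 then j
    else decide ((idx : ℕ) = 2*m ∨ (idx : ℕ) = 2*m-1)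

/-- Start of `Q^{ij}`: the string `ij00(0)^{n-7}100`. -/
def startQ (m : ℕ) (i j : Bool) : Fin (2*(m+1)+1) → Bool :=
  fun idx => if (idx : ℕ) = 2*m+2 then i else if (idx : ℕ) = 2*m+1 then j
    else decide ((idx : ℕ) = 2)

/-- End of `Q^{ij}`: the string `ij01(0)^{n-7}100`. -/
def endQ (m : ℕ) (i j : Bool) : Fin (2*(m+1)+1) → Bool :=
  fun idx => if (idx : ℕ) = 2*m+2 then i else if (idx : ℕ) = 2*m+1 then j
    else decide ((idx : ℕ) = 2*m-1 ∨ (idx : ℕ) = 2)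

namespace SimpleGraph.Walk

variable {V : Type*} {G : SimpleGraph V} {u v w x y z : V}

/-- The concatenation `p ⇒ q` of the paper. -/
def join (p : G.Walk u v) (h : G.Adj v w) (q : G.Walk w x) : G.Walk u x :=
  p.append (cons h q)

@[simp]
lemma support_join (p : G.Walk u v) (h : G.Adj v w) (q : G.Walk w x) :
    (p.join h q).support = p.support ++ q.support := by
  simp [join, support_append]

@[simp]
lemma edges_join (p : G.Walk u v) (h : G.Adj v w) (q : G.Walk w x) :
    (p.join h q).edges = p.edges ++ s(v, w) :: q.edges := by
  simp [join, edges_append]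

def IsHamiltonianPathOn (p : G.Walk u v) (s : Set V) : Prop :=
  p.IsPath ∧ ∀ y, y ∈ p.support ↔ y ∈ s

variable {p : G.Walk u v} {q : G.Walk w x} {s t : Set V}

lemma IsHamiltonianPathOn.reverse (hp : p.IsHamiltonianPathOn s) :
    p.reverse.IsHamiltonianPathOn s :=
  ⟨hp.1.reverse, fun y => by rw [support_reverse, List.mem_reverse, hp.2]⟩

lemma IsHamiltonianPathOn.join (hp : p.IsHamiltonianPathOn s) (hq : q.IsHamiltonianPathOn t)
    (hst : Disjoint s t) (h : G.Adj v w) : (p.join h q).IsHamiltonianPathOn (s ∪ t) := by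
  refine ⟨?_, fun y => by rw [support_join, List.mem_append, hp.2, hq.2, Set.mem_union]⟩
  rw [isPath_def, support_join]
  exact hp.1.support_nodup.append hq.1.support_nodup fun y hyp hyq =>
    Set.disjoint_left.1 hst ((hp.2 y).1 hyp) ((hq.2 y).1 hyq)

lemma IsHamiltonianPathOn.isHamiltonian_of_forall_mem [DecidableEq V]
    (hp : p.IsHamiltonianPathOn s) (hs : ∀ y, y ∈ s) : p.IsHamiltonian :=
  hp.1.isHamiltonian_of_mem fun y => (hp.2 y).2 (hs y)

lemma IsHamiltonianPathOn.mem_of_mem_edges (hp : p.IsHamiltonianPathOn s)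
    (he : s(y, z) ∈ p.edges) : y ∈ s ∧ z ∈ s :=
  ⟨(hp.2 y).1 (p.fst_mem_support_of_mem_edges he), (hp.2 z).1 (p.snd_mem_support_of_mem_edges he)⟩

end SimpleGraph.Walk

lemma crossRel.ne {k : ℕ} {b b' : Fin (2*(k+1)+1) → Bool} (h : crossRel k b b') : b ≠ b' := by
  rintro rfl
  rcases h with ⟨-, ⟨h, -⟩ | ⟨-, h, -⟩ | ⟨-, -, h⟩⟩ <;> simp at h

lemma twistedCube_adj_of_crossRel {k : ℕ} {b b' : Fin (2*(k+1)+1) → Bool} (h : crossRel k b b') :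
    (TwistedCube (k+1)).Adj b b' :=
  ⟨h.ne, Or.inr (Or.inl h)⟩

/-- The string `i j r(2m) ⋯ r(1) r(0)`. -/
def withLeading (m : ℕ) (i j : Bool) (r : ℕ → Bool) : Fin (2*(m+1)+1) → Bool :=
  fun idx => if (idx : ℕ) = 2*m+2 then i else if (idx : ℕ) = 2*m+1 then j else r idx

section withLeading

variable (m : ℕ) (i j : Bool) (r : ℕ → Bool)

@[simp]
lemma withLeading_top : withLeading m i j r ⟨2*m+2, by omega⟩ = i := by
  simp [withLeading]

@[simp]
lemma withLeading_second : withLeading m i j r ⟨2*m+1, by omega⟩ = j := by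
  simp [withLeading]

lemma withLeading_of_lt {l : ℕ} (hl : l < 2*m+1) : withLeading m i j r ⟨l, by omega⟩ = r l := by
  simp [withLeading, show l ≠ 2*m+2 by omega, show l ≠ 2*m+1 by omega]

lemma lowBits_withLeading : lowBits (withLeading m i j r) = fun l : Fin (2*m+1) => r l := by
  funext l
  exact withLeading_of_lt m i j r l.isLt

lemma parityFn_withLeading :
    parityFn (withLeading m i j r) (2*m) = decide (((List.range (2*m+1)).filter r).length % 2 = 1) := by
  unfold parityFn
  congr 3
  refine congrArg List.length (List.filter_congr fun l hl => ?_)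
  have hl := List.mem_range.1 hl
  rw [dif_pos (by omega)]
  exact withLeading_of_lt m i j r hl

end withLeading

section Endpoints

variable (m : ℕ)

lemma startP_eq (i j : Bool) : startP m i j = withLeading m i j fun _ => false := rfl

lemma endP_eq (i j : Bool) :
    endP m i j = withLeading m i j fun l => decide (l = 2*m ∨ l = 2*m-1) := rfl

lemma startQ_eq (i j : Bool) : startQ m i j = withLeading m i j fun l => decide (l = 2) := rfl

lemma endQ_eq (i j : Bool) :
    endQ m i j = withLeading m i j fun l => decide (l = 2*m-1 ∨ l = 2) := rfl

variable (i j : Bool) (r : ℕ → Bool)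

lemma withLeading_adj_not_top :
    (TwistedCube (m+1)).Adj (withLeading m i j r) (withLeading m (!i) j r) :=
  twistedCube_adj_of_crossRel
    ⟨by rw [lowBits_withLeading, lowBits_withLeading], Or.inl ⟨by simp, by simp⟩⟩

lemma withLeading_adj_not_top_not_second (h : parityFn (withLeading m i j r) (2*m) = false) :
    (TwistedCube (m+1)).Adj (withLeading m i j r) (withLeading m (!i) (!j) r) :=
  twistedCube_adj_of_crossRel
    ⟨by rw [lowBits_withLeading, lowBits_withLeading], Or.inr (Or.inl ⟨h, by simp, by simp⟩)⟩

lemma withLeading_adj_not_second (h : parityFn (withLeading m i j r) (2*m) = true) :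
    (TwistedCube (m+1)).Adj (withLeading m i j r) (withLeading m i (!j) r) :=
  twistedCube_adj_of_crossRel
    ⟨by rw [lowBits_withLeading, lowBits_withLeading], Or.inr (Or.inr ⟨h, by simp, by simp⟩)⟩

lemma endP_adj : (TwistedCube (m+1)).Adj (endP m i j) (endP m (!i) j) := by
  simp only [endP_eq]
  exact withLeading_adj_not_top m i j _

lemma endQ_adj : (TwistedCube (m+1)).Adj (endQ m i j) (endQ m (!i) j) := by
  simp only [endQ_eq]
  exact withLeading_adj_not_top m i j _

lemma startP_adj : (TwistedCube (m+1)).Adj (startP m i j) (startP m (!i) (!j)) := by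
  simp only [startP_eq]
  exact withLeading_adj_not_top_not_second m i j _ (by simp [parityFn_withLeading])

lemma startQ_adj (hm : 1 ≤ m) : (TwistedCube (m+1)).Adj (startQ m i j) (startQ m i (!j)) := by
  simp only [startQ_eq]
  exact withLeading_adj_not_second m i j _
    (by simp [parityFn_withLeading, List.filter_eq, List.count_range, show 2 < 2*m+1 by omega])

end Endpoints

def subcube (m : ℕ) (i j : Bool) : Set (Fin (2*(m+1)+1) → Bool) :=
  {v | v ⟨2*m+2, by omega⟩ = i ∧ v ⟨2*m+1, by omega⟩ = j}

def IsCrossEdgeWithBit2 (m : ℕ) (c : Bool) (e : Sym2 (Fin (2*(m+1)+1) → Bool)) : Prop :=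
  ∃ x y, e = s(x, y) ∧ (∀ i j, ¬(x ∈ subcube m i j ∧ y ∈ subcube m i j)) ∧
    x ⟨2, by omega⟩ = c ∧ y ⟨2, by omega⟩ = c

section Subcube

variable {m : ℕ} {i j : Bool}

lemma exists_mem_subcube (v : Fin (2*(m+1)+1) → Bool) : ∃ i j, v ∈ subcube m i j :=
  ⟨_, _, rfl, rfl⟩

lemma disjoint_subcube {i' j' : Bool} (h : ¬(i = i' ∧ j = j')) :
    Disjoint (subcube m i j) (subcube m i' j') :=
  Set.disjoint_left.2 fun _ hv hv' => h ⟨hv.1.symm.trans hv'.1, hv.2.symm.trans hv'.2⟩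

lemma isCrossEdgeWithBit2_withLeading {i' j' c : Bool} {r : ℕ → Bool} (hm : 1 ≤ m)
    (hij : ¬(i = i' ∧ j = j')) (hc : r 2 = c) :
    IsCrossEdgeWithBit2 m c s(withLeading m i j r, withLeading m i' j' r) := by
  refine ⟨_, _, rfl, fun i₀ j₀ h => hij ?_, ?_, ?_⟩
  · simp only [subcube, Set.mem_ofPred_eq, withLeading_top, withLeading_second] at h
    exact ⟨h.1.1.trans h.2.1.symm, h.1.2.trans h.2.2.symm⟩
  all_goals rw [withLeading_of_lt m _ _ r (by omega), hc]

variable {c c' : Bool} {e : Sym2 (Fin (2*(m+1)+1) → Bool)}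

lemma IsCrossEdgeWithBit2.not_mem_edges (hc : IsCrossEdgeWithBit2 m c e) {u v}
    {p : (TwistedCube (m+1)).Walk u v} (hp : p.IsHamiltonianPathOn (subcube m i j)) :
    e ∉ p.edges := by
  obtain ⟨x, y, rfl, hxy, -, -⟩ := hc
  exact fun he => hxy i j (hp.mem_of_mem_edges he)

lemma IsCrossEdgeWithBit2.eq (hc : IsCrossEdgeWithBit2 m c e) (hc' : IsCrossEdgeWithBit2 m c' e) :
    c = c' := by
  obtain ⟨x, y, rfl, -, hx, hy⟩ := hc
  obtain ⟨x', y', he, -, hx', hy'⟩ := hc'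
  rcases Sym2.eq_iff.1 he with ⟨rfl, -⟩ | ⟨rfl, -⟩
  exacts [hx.symm.trans hx', hx.symm.trans hy']

end Subcube

section Concatenation

open SimpleGraph.Walk

variable {m : ℕ}

def concatP (P : ∀ i j : Bool, (TwistedCube (m+1)).Walk (startP m i j) (endP m i j)) :
    (TwistedCube (m+1)).Walk (startP m false false) (startP m true true) :=
  (P false false).join (endP_adj m false false) <|
    (P true false).reverse.join (startP_adj m true false) <|
      (P false true).join (endP_adj m false true) (P true true).reverse

def concatQ (hm : 1 ≤ m) (Q : ∀ i j : Bool, (TwistedCube (m+1)).Walk (startQ m i j) (endQ m i j)) :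
    (TwistedCube (m+1)).Walk (startQ m false false) (startQ m false true) :=
  (Q false false).join (endQ_adj m false false) <|
    (Q true false).reverse.join (startQ_adj m true false hm) <|
      (Q true true).join (endQ_adj m true true) (Q false true).reverse

variable {P : ∀ i j : Bool, (TwistedCube (m+1)).Walk (startP m i j) (endP m i j)}
  {Q : ∀ i j : Bool, (TwistedCube (m+1)).Walk (startQ m i j) (endQ m i j)}

lemma concatP_isHamiltonian (hP : ∀ i j, (P i j).IsHamiltonianPathOn (subcube m i j)) :
    (concatP P).IsHamiltonian := by
  refine IsHamiltonianPathOn.isHamiltonian_of_forall_mem ((hP false false).join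
    ((hP true false).reverse.join ((hP false true).join (hP true true).reverse ?_ _) ?_ _) ?_ _) ?_
  iterate 3 simp [Set.disjoint_union_right, disjoint_subcube]
  · intro v
    obtain ⟨i, j, hv⟩ := exists_mem_subcube v
    cases i <;> cases j <;> simp [hv]

lemma concatQ_isHamiltonian (hm : 1 ≤ m)
    (hQ : ∀ i j, (Q i j).IsHamiltonianPathOn (subcube m i j)) : (concatQ hm Q).IsHamiltonian := by
  refine IsHamiltonianPathOn.isHamiltonian_of_forall_mem ((hQ false false).join
    ((hQ true false).reverse.join ((hQ true true).join (hQ false true).reverse ?_ _) ?_ _) ?_ _) ?_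
  iterate 3 simp [Set.disjoint_union_right, disjoint_subcube]
  · intro v
    obtain ⟨i, j, hv⟩ := exists_mem_subcube v
    cases i <;> cases j <;> simp [hv]

lemma mem_edges_concatP (hm : 2 ≤ m) {e : Sym2 (Fin (2*(m+1)+1) → Bool)}
    (he : e ∈ (concatP P).edges) : (∃ i j, e ∈ (P i j).edges) ∨ IsCrossEdgeWithBit2 m false e := by
  simp only [concatP, edges_join, edges_reverse, List.mem_append, List.mem_cons, List.mem_reverse] at he
  rcases he with h | rfl | h | rfl | h | rfl | h
  all_goals first
    | exact Or.inl ⟨_, _, h⟩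
    | (simp only [startP_eq, endP_eq]
       exact Or.inr (isCrossEdgeWithBit2_withLeading (by omega) (by decide) (by simp <;> omega)))

lemma mem_edges_concatQ (hm : 1 ≤ m) {e : Sym2 (Fin (2*(m+1)+1) → Bool)}
    (he : e ∈ (concatQ hm Q).edges) : (∃ i j, e ∈ (Q i j).edges) ∨ IsCrossEdgeWithBit2 m true e := by
  simp only [concatQ, edges_join, edges_reverse, List.mem_append, List.mem_cons, List.mem_reverse] at he
  rcases he with h | rfl | h | rfl | h | rfl | h
  all_goals first
    | exact Or.inl ⟨_, _, h⟩
    | (simp only [startQ_eq, endQ_eq]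
       exact Or.inr (isCrossEdgeWithBit2_withLeading hm (by decide) (by simp)))

lemma concatP_edges_disjoint_concatQ (hm : 2 ≤ m)
    (hP : ∀ i j, (P i j).IsHamiltonianPathOn (subcube m i j))
    (hQ : ∀ i j, (Q i j).IsHamiltonianPathOn (subcube m i j))
    (hPQ : ∀ i j e, e ∈ (P i j).edges → e ∉ (Q i j).edges) :
    ∀ e ∈ (concatP P).edges, e ∉ (concatQ (by omega) Q).edges := by
  intro e heP heQ
  rcases mem_edges_concatP hm heP with ⟨i, j, heP⟩ | hcP <;>
    rcases mem_edges_concatQ (by omega) heQ with ⟨i', j', heQ⟩ | hcQ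
  · induction e using Sym2.ind with | _ x y =>
    obtain ⟨hxP, -⟩ := (hP i j).mem_of_mem_edges heP
    obtain ⟨hxQ, -⟩ := (hQ i' j').mem_of_mem_edges heQ
    obtain ⟨rfl, rfl⟩ : i = i' ∧ j = j' := ⟨hxP.1.symm.trans hxQ.1, hxP.2.symm.trans hxQ.2⟩
    exact hPQ i j _ heP heQ
  · exact hcQ.not_mem_edges (hP i j) heP
  · exact hcP.not_mem_edges (hQ i' j') heQ
  · exact Bool.false_ne_true (hcP.eq hcQ)

end Concatenation

/-- For odd `n = 2(m+1)+1 ≥ 7`, if each of the four subcubes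
`TQ_{n-2}^{ij}` of `TQ_n` contains two edge-disjoint Hamiltonian paths `P^{ij}`
from `ij00(0)^{n-7}000` to `ij11(0)^{n-7}000` and `Q^{ij}` from `ij00(0)^{n-7}100`
to `ij01(0)^{n-7}100`, then the concatenations
`P = P^{00} ⇒ rev(P^{10}) ⇒ P^{01} ⇒ rev(P^{11})` and
`Q = Q^{00} ⇒ rev(Q^{10}) ⇒ Q^{11} ⇒ rev(Q^{01})`
are two edge-disjoint Hamiltonian paths of `TQ_n`. -/
theorem twistedCube_concatenation (m : ℕ) (hm : 2 ≤ m)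
    (P : ∀ i j : Bool, (TwistedCube (m+1)).Walk (startP m i j) (endP m i j))
    (Q : ∀ i j : Bool, (TwistedCube (m+1)).Walk (startQ m i j) (endQ m i j))
    (hPpath : ∀ i j, (P i j).IsPath) (hQpath : ∀ i j, (Q i j).IsPath)
    (hPsub : ∀ i j v, v ∈ (P i j).support →
      v ⟨2*m+2, by omega⟩ = i ∧ v ⟨2*m+1, by omega⟩ = j)
    (hQsub : ∀ i j v, v ∈ (Q i j).support →
      v ⟨2*m+2, by omega⟩ = i ∧ v ⟨2*m+1, by omega⟩ = j)
    (hPham : ∀ (i j : Bool) (v : Fin (2*(m+1)+1) → Bool),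
      v ⟨2*m+2, by omega⟩ = i → v ⟨2*m+1, by omega⟩ = j → v ∈ (P i j).support)
    (hQham : ∀ (i j : Bool) (v : Fin (2*(m+1)+1) → Bool),
      v ⟨2*m+2, by omega⟩ = i → v ⟨2*m+1, by omega⟩ = j → v ∈ (Q i j).support)
    (hdisj : ∀ i j e, e ∈ (P i j).edges → e ∉ (Q i j).edges) :
    ∃ (h₁ : (TwistedCube (m+1)).Adj (endP m false false) (endP m true false))
      (h₂ : (TwistedCube (m+1)).Adj (startP m true false) (startP m false true))
      (h₃ : (TwistedCube (m+1)).Adj (endP m false true) (endP m true true))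
      (g₁ : (TwistedCube (m+1)).Adj (endQ m false false) (endQ m true false))
      (g₂ : (TwistedCube (m+1)).Adj (startQ m true false) (startQ m true true))
      (g₃ : (TwistedCube (m+1)).Adj (endQ m true true) (endQ m false true)),
      ((P false false).append (SimpleGraph.Walk.cons h₁
        ((P true false).reverse.append (SimpleGraph.Walk.cons h₂
          ((P false true).append (SimpleGraph.Walk.cons h₃
            (P true true).reverse)))))).IsPath ∧
      ((P false false).append (SimpleGraph.Walk.cons h₁
        ((P true false).reverse.append (SimpleGraph.Walk.cons h₂
          ((P false true).append (SimpleGraph.Walk.cons h₃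
            (P true true).reverse)))))).IsHamiltonian ∧
      ((Q false false).append (SimpleGraph.Walk.cons g₁
        ((Q true false).reverse.append (SimpleGraph.Walk.cons g₂
          ((Q true true).append (SimpleGraph.Walk.cons g₃
            (Q false true).reverse)))))).IsPath ∧
      ((Q false false).append (SimpleGraph.Walk.cons g₁
        ((Q true false).reverse.append (SimpleGraph.Walk.cons g₂
          ((Q true true).append (SimpleGraph.Walk.cons g₃
            (Q false true).reverse)))))).IsHamiltonian ∧
      ∀ e, e ∈ ((P false false).append (SimpleGraph.Walk.cons h₁
        ((P true false).reverse.append (SimpleGraph.Walk.cons h₂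
          ((P false true).append (SimpleGraph.Walk.cons h₃
            (P true true).reverse)))))).edges →
        e ∉ ((Q false false).append (SimpleGraph.Walk.cons g₁
        ((Q true false).reverse.append (SimpleGraph.Walk.cons g₂
          ((Q true true).append (SimpleGraph.Walk.cons g₃
            (Q false true).reverse)))))).edges := by
  have hP : ∀ i j, (P i j).IsHamiltonianPathOn (subcube m i j) := fun i j =>
    ⟨hPpath i j, fun v => ⟨hPsub i j v, fun hv => hPham i j v hv.1 hv.2⟩⟩
  have hQ : ∀ i j, (Q i j).IsHamiltonianPathOn (subcube m i j) := fun i j =>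
    ⟨hQpath i j, fun v => ⟨hQsub i j v, fun hv => hQham i j v hv.1 hv.2⟩⟩
  have hPcat := concatP_isHamiltonian hP
  have hQcat := concatQ_isHamiltonian (by omega) hQ
  exact ⟨endP_adj m false false, startP_adj m true false, endP_adj m false true,
    endQ_adj m false false, startQ_adj m true false (by omega), endQ_adj m true true,
    hPcat.isPath, hPcat, hQcat.isPath, hQcat, concatP_edges_disjoint_concatQ hm hP hQ hdisj⟩
end

section
/- For every odd integer n ≥ 3, TQ_n can be vertex-partitioned into two induced subgraphs of 2^{n-1} vertices each, both of which are Hamiltonian. -/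
namespace SimpleGraph

variable {V V₁ V₂ W : Type*} {G : SimpleGraph V} {H : SimpleGraph W}

lemma IsHamiltonian.map [Fintype V] [Fintype W] [DecidableEq V] [DecidableEq W] {f : G →g H}
    (hf : Function.Bijective f) (hG : G.IsHamiltonian) : H.IsHamiltonian := fun hW =>
  have ⟨_, p, hp⟩ := hG (by rwa [Fintype.card_of_bijective hf])
  ⟨_, p.map f, hp.map hf⟩

def snake (l : List V) (b : Bool) : List (V × Bool) :=
  l.map (·, b) ++ l.reverse.map (·, !b)

@[simp] lemma head?_snake (l : List V) (b : Bool) : (snake l b).head? = l.head?.map (·, b) := by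
  cases l <;> simp [snake]

@[simp] lemma getLast?_snake (l : List V) (b : Bool) :
    (snake l b).getLast? = l.head?.map (·, !b) := by
  rw [snake, List.getLast?_append]
  cases l <;> simp

/-- Hamiltonian paths as vertex lists, which concatenate and map more easily than walks. -/
structure IsHamiltonianList (G : SimpleGraph V) (l : List V) : Prop where
  isChain : l.IsChain G.Adj
  nodup : l.Nodup
  mem : ∀ v, v ∈ l

namespace IsHamiltonianList

variable {l : List V}

lemma reverse (hl : G.IsHamiltonianList l) : G.IsHamiltonianList l.reverse :=
  ⟨List.isChain_reverse.2 (hl.isChain.imp fun _ _ h => h.symm), List.nodup_reverse.2 hl.nodup,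
    by simpa using hl.mem⟩

lemma append_map {G₁ : SimpleGraph V₁} {G₂ : SimpleGraph V₂} {l₁ : List V₁} {l₂ : List V₂}
    (h₁ : G₁.IsHamiltonianList l₁) (h₂ : G₂.IsHamiltonianList l₂) (f₁ : G₁ →g H) (f₂ : G₂ →g H)
    (hf : Function.Bijective (Sum.elim f₁ f₂))
    (hadj : ∀ x ∈ l₁.getLast?, ∀ y ∈ l₂.head?, H.Adj (f₁ x) (f₂ y)) :
    H.IsHamiltonianList (l₁.map f₁ ++ l₂.map f₂) := by
  have hsplit :
      l₁.map f₁ ++ l₂.map f₂ = (l₁.map Sum.inl ++ l₂.map Sum.inr).map (Sum.elim f₁ f₂) := by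
    simp
  refine ⟨((List.isChain_map f₁).2 (h₁.isChain.imp fun _ _ => f₁.map_adj)).append
    ((List.isChain_map f₂).2 (h₂.isChain.imp fun _ _ => f₂.map_adj)) ?_, ?_, ?_⟩
  · simpa using hadj
  · rw [hsplit]
    refine (List.Nodup.append (h₁.nodup.map Sum.inl_injective) (h₂.nodup.map Sum.inr_injective)
      ?_).map hf.injective
    simp [List.disjoint_left]
  · rw [hsplit, hf.surjective.forall]
    rintro (x | x) <;> simp [h₁.mem, h₂.mem]

lemma length_eq_card [Fintype V] (hl : G.IsHamiltonianList l) : l.length = Fintype.card V := by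
  classical
  rw [← List.toFinset_card_of_nodup hl.nodup,
    Finset.eq_univ_of_forall fun v => List.mem_toFinset.2 (hl.mem v), Finset.card_univ]

lemma isHamiltonian [Fintype V] [DecidableEq V] (hl : G.IsHamiltonianList l) (hlen : 3 ≤ l.length)
    (hadj : ∀ x ∈ l.getLast?, ∀ y ∈ l.head?, G.Adj x y) : G.IsHamiltonian := by
  intro _
  have hne : l ≠ [] := by rintro rfl; simp at hlen
  have hclose : G.Adj (l.getLast hne) (l.head hne) := by
    simp_all [List.getLast?_eq_some_getLast hne, List.head?_eq_some_head hne]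
  set p := Walk.ofSupport l hne hl.isChain
  have hp : p.IsPath := Walk.IsPath.mk' (by simpa [p] using hl.nodup)
  refine ⟨_, Walk.cons hclose p, ?_, ?_⟩
  · rw [Walk.isCycle_iff_isPath_tail_and_le_length]
    refine ⟨by simpa using hp, ?_⟩
    simp only [Walk.length_cons, Walk.length_ofSupport, p]
    omega
  · intro v
    simpa using hp.isHamiltonian_of_mem (by simpa [p] using hl.mem) v

lemma boxProd_top (hl : G.IsHamiltonianList l) (b : Bool) :
    (G □ (⊤ : SimpleGraph Bool)).IsHamiltonianList (snake l b) := by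
  refine hl.append_map hl.reverse (boxProdLeft G ⊤ b).toHom (boxProdLeft G ⊤ !b).toHom
    ⟨?_, ?_⟩ ?_
  · rintro (x | x) (y | y) h <;> simp_all
  · rintro ⟨x, c⟩
    cases Bool.eq_or_eq_not c b with
    | inl h => exact ⟨.inl x, by simp [h]⟩
    | inr h => exact ⟨.inr x, by simp [h]⟩
  · intro x hx y hy
    rw [List.head?_reverse, Option.mem_def.1 hx, Option.mem_def, Option.some_inj] at hy
    simp [hy, boxProd_adj]

lemma isHamiltonian_boxProd_top [Fintype V] [DecidableEq V] [Nontrivial V]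
    (hl : G.IsHamiltonianList l) : (G □ (⊤ : SimpleGraph Bool)).IsHamiltonian := by
  refine (hl.boxProd_top false).isHamiltonian ?_ ?_
  · have := Fintype.one_lt_card (α := V)
    simp only [snake, List.length_append, List.length_map, List.length_reverse, hl.length_eq_card]
    omega
  · simp only [head?_snake, getLast?_snake, Option.mem_map]
    rintro _ ⟨u, hu, rfl⟩ _ ⟨v, hv, rfl⟩
    cases Option.mem_unique hu hv
    simp [boxProd_adj]

end IsHamiltonianList

end SimpleGraph

namespace TwistedCube

open SimpleGraph

def extendBits (m : ℕ) (hi mid : Bool) (v : Fin (2*m+1) → Bool) : Fin (2*(m+1)+1) → Bool :=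
  fun i => if h : (i : ℕ) < 2*m+1 then v ⟨i, h⟩ else if (i : ℕ) = 2*m+1 then mid else hi

variable {m : ℕ}

@[simp] lemma lowBits_extendBits (hi mid : Bool) (v : Fin (2*m+1) → Bool) :
    lowBits (extendBits m hi mid v) = v := by
  funext i
  simp [lowBits, extendBits, i.isLt]

@[simp] lemma extendBits_apply_hi (hi mid : Bool) (v : Fin (2*m+1) → Bool) :
    extendBits m hi mid v ⟨2*m+2, by omega⟩ = hi := by
  simp [extendBits]

@[simp] lemma extendBits_apply_mid (hi mid : Bool) (v : Fin (2*m+1) → Bool) :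
    extendBits m hi mid v ⟨2*m+1, by omega⟩ = mid := by
  simp [extendBits]

lemma extendBits_eq_self (b : Fin (2*(m+1)+1) → Bool) :
    extendBits m (b ⟨2*m+2, by omega⟩) (b ⟨2*m+1, by omega⟩) (lowBits b) = b := by
  funext i
  simp only [extendBits, lowBits]
  split_ifs with h₁ h₂
  · rfl
  · exact congrArg b (Fin.ext h₂.symm)
  · exact congrArg b (Fin.ext (by have := i.isLt; dsimp only; omega))

lemma extendBits_inj {hi mid hi' mid' : Bool} {v v' : Fin (2*m+1) → Bool} :
    extendBits m hi mid v = extendBits m hi' mid' v' ↔ hi = hi' ∧ mid = mid' ∧ v = v' := by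
  refine ⟨fun h => ⟨?_, ?_, ?_⟩, fun ⟨h₁, h₂, h₃⟩ => h₁ ▸ h₂ ▸ h₃ ▸ rfl⟩
  · simpa using congrFun h ⟨2*m+2, by omega⟩
  · simpa using congrFun h ⟨2*m+1, by omega⟩
  · simpa using congrArg lowBits h

lemma parityFn_extendBits (hi mid : Bool) (v : Fin (2*m+1) → Bool) :
    parityFn (extendBits m hi mid v) (2*m) = parityFn v (2*m) := by
  unfold parityFn
  congr 4
  refine List.filter_congr fun j hj => ?_
  have hj : j < 2*m+1 := List.mem_range.1 hj
  simp [hj, extendBits, show j < 2*(m+1)+1 by omega]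

lemma adj_extendBits_of_adj (hi mid : Bool) {v v' : Fin (2*m+1) → Bool}
    (h : (TwistedCube m).Adj v v') :
    (TwistedCube (m+1)).Adj (extendBits m hi mid v) (extendBits m hi mid v') :=
  ⟨fun he => h.ne (extendBits_inj.1 he).2.2, Or.inl ⟨by simp, by simp, by simpa using h⟩⟩

lemma adj_extendBits_not_hi (hi mid : Bool) (v : Fin (2*m+1) → Bool) :
    (TwistedCube (m+1)).Adj (extendBits m hi mid v) (extendBits m (!hi) mid v) :=
  ⟨fun he => by simp [extendBits_inj] at he, Or.inr (Or.inl ⟨by simp, Or.inl ⟨by simp, by simp⟩⟩)⟩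

lemma adj_extendBits_parityFn (v : Fin (2*m+1) → Bool) :
    (TwistedCube (m+1)).Adj (extendBits m true false v)
      (extendBits m (parityFn v (2*m)) true v) := by
  refine ⟨fun he => by simp [extendBits_inj] at he, Or.inr (Or.inl ⟨by simp, Or.inr ?_⟩)⟩
  rw [parityFn_extendBits]
  cases parityFn v (2*m) <;> simp

def prismHom (m : ℕ) (mid : Bool) :
    (TwistedCube m).boxProd (⊤ : SimpleGraph Bool) →g TwistedCube (m+1) where
  toFun p := extendBits m p.2 mid p.1
  map_rel' := by
    rintro ⟨v, hi⟩ ⟨v', hi'⟩ h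
    rcases boxProd_adj.1 h with ⟨hv, rfl⟩ | ⟨hhi, rfl⟩
    · exact adj_extendBits_of_adj hi mid hv
    · obtain rfl : hi' = !hi := Bool.eq_not.2 (Ne.symm hhi)
      exact adj_extendBits_not_hi hi mid v

lemma bijective_sumElim_prismHom (m : ℕ) :
    Function.Bijective (Sum.elim (prismHom m false) (prismHom m true)) := by
  refine ⟨?_, fun b => ?_⟩
  · rintro (⟨v, hi⟩ | ⟨v, hi⟩) (⟨v', hi'⟩ | ⟨v', hi'⟩) h <;>
      simp_all [prismHom, extendBits_inj]
  · cases hmid : b ⟨2*m+1, by omega⟩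
    · exact ⟨.inl (lowBits b, b ⟨2*m+2, by omega⟩), by simp [prismHom, ← hmid, extendBits_eq_self]⟩
    · exact ⟨.inr (lowBits b, b ⟨2*m+2, by omega⟩), by simp [prismHom, ← hmid, extendBits_eq_self]⟩

def midHalf (m : ℕ) (mid : Bool) : Finset (Fin (2*(m+1)+1) → Bool) :=
  Finset.univ.filter fun b => b ⟨2*m+1, by omega⟩ = mid

lemma compl_midHalf (m : ℕ) (mid : Bool) : (midHalf m mid)ᶜ = midHalf m (!mid) := by
  ext b
  simp [midHalf, Bool.eq_not]

def midHalfHom (m : ℕ) (mid : Bool) :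
    (TwistedCube m).boxProd (⊤ : SimpleGraph Bool) →g
      (TwistedCube (m+1)).induce (midHalf m mid : Set (Fin (2*(m+1)+1) → Bool)) where
  toFun p := ⟨prismHom m mid p, by simp [midHalf, prismHom]⟩
  map_rel' h := (prismHom m mid).map_rel h

lemma bijective_midHalfHom (m : ℕ) (mid : Bool) : Function.Bijective (midHalfHom m mid) := by
  refine ⟨fun p q h => ?_, fun ⟨b, hb⟩ => ⟨(lowBits b, b ⟨2*m+2, by omega⟩), ?_⟩⟩
  · have := congrArg Subtype.val h
    simp_all [midHalfHom, prismHom, extendBits_inj, Prod.ext_iff]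
  · simp only [midHalf, Finset.coe_filter, Finset.mem_univ, true_and, Set.mem_ofPred_eq] at hb
    simp [midHalfHom, prismHom, ← hb, extendBits_eq_self]

lemma card_midHalf (m : ℕ) (mid : Bool) : (midHalf m mid).card = 2^(2*(m+1)) := by
  have hcard := Fintype.card_of_bijective (bijective_midHalfHom m mid)
  simp only [Finset.coe_sort_coe, Fintype.card_coe] at hcard
  simp [← hcard, pow_succ, mul_add]

theorem exists_isHamiltonianList : ∀ m, ∃ l, (TwistedCube m).IsHamiltonianList l
  | 0 => ⟨Finset.univ.toList, Finset.nodup_toList _ |>.isChain, Finset.nodup_toList _, by simp⟩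
  | m+1 => by
    obtain ⟨l, hl⟩ := exists_isHamiltonianList m
    obtain ⟨u, l, rfl⟩ := List.exists_cons_of_ne_nil (List.ne_nil_of_mem (hl.mem default))
    refine ⟨_, (hl.boxProd_top false).append_map (hl.boxProd_top (parityFn u (2*m)))
      (prismHom m false) (prismHom m true) (bijective_sumElim_prismHom m) ?_⟩
    simp only [getLast?_snake, head?_snake, List.head?_cons]
    simpa [prismHom] using adj_extendBits_parityFn u

lemma isHamiltonian_induce_midHalf (m : ℕ) (mid : Bool) :
    ((TwistedCube (m+1)).induce (midHalf m mid : Set (Fin (2*(m+1)+1) → Bool))).IsHamiltonian :=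
  have ⟨_, hl⟩ := exists_isHamiltonianList m
  hl.isHamiltonian_boxProd_top.map (bijective_midHalfHom m mid)

end TwistedCube

/-- For every odd `n = 2k+1 ≥ 3`, `TQ_n` can be vertex-partitioned into
two induced subgraphs of `2^(n-1)` vertices each, both of which are Hamiltonian. -/
theorem twistedCube_partition_into_two_hamiltonian_halves (k : ℕ) (hk : 1 ≤ k) :
    ∃ S : Finset (Fin (2*k+1) → Bool),
      S.card = 2^(2*k) ∧ Sᶜ.card = 2^(2*k) ∧
      ((TwistedCube k).induce (S : Set (Fin (2*k+1) → Bool))).IsHamiltonian ∧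
      ((TwistedCube k).induce ((Sᶜ : Finset _) : Set (Fin (2*k+1) → Bool))).IsHamiltonian := by
  obtain ⟨m, rfl⟩ : ∃ m, k = m + 1 := ⟨k - 1, by omega⟩
  refine ⟨TwistedCube.midHalf m false, TwistedCube.card_midHalf m false, ?_,
    TwistedCube.isHamiltonian_induce_midHalf m false, ?_⟩ <;> rw [TwistedCube.compl_midHalf]
  · exact TwistedCube.card_midHalf m true
  · exact TwistedCube.isHamiltonian_induce_midHalf m true
end
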